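/- arXiv:1109.4434 — 2 statements merged into one kernel-verified Lean document; each statement's English description precedes it below -/
import Mathlib

section
/- For a permutation w ∈ S_m, let ŵ be the permutation of [2m] given by ŵ(i) = 2m+1−i for i ∈ [m] and ŵ(m+j) = w^{-1}(m+1−j) for j ∈ [m]. Then the number of alignments of ŵ equals 2·binom(m,2) − ℓ(w), and hence ℓ(ŵ) := m² − A(ŵ) = m + ℓ(w), where ℓ(w) is the number of inversions of w. -/
def cpos {n : ℕ} (i a : Fin n) : ℕ := ((a - i : Fin n) : ℕ)

def CyclicallyOrdered {n : ℕ} (a b c d : Fin n) : Prop :=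
  0 < cpos a b ∧ cpos a b < cpos a c ∧ cpos a c < cpos a d

instance {n : ℕ} (a b c d : Fin n) : Decidable (CyclicallyOrdered a b c d) := by
  unfold CyclicallyOrdered; infer_instance

def WeaklySeparated {n : ℕ} (I J : Finset (Fin n)) : Prop :=
  ¬ ∃ a b a' b' : Fin n, CyclicallyOrdered a b a' b' ∧
    a ∈ I \ J ∧ a' ∈ I \ J ∧ b ∈ J \ I ∧ b' ∈ J \ I

def cycIco {n : ℕ} (i j : Fin n) : Finset (Fin n) :=
  Finset.univ.filter (fun x => cpos i x < cpos i j)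

def cycIcc {n : ℕ} (i j : Fin n) : Finset (Fin n) :=
  Finset.univ.filter (fun x => cpos i x ≤ cpos i j)

def cycOpen {n : ℕ} (i j : Fin n) : Finset (Fin n) :=
  Finset.univ.filter (fun x => 0 < cpos i x ∧ cpos i x < cpos i j)

def IsGrassmannNecklace {n : ℕ} [NeZero n] (k : ℕ) (I : Fin n → Finset (Fin n)) : Prop :=
  (∀ i, (I i).card = k) ∧ (∀ i, I i \ {i} ⊆ I (i + 1)) ∧ (∀ i, i ∉ I i → I (i + 1) = I i)

def leShift {n : ℕ} (i : Fin n) (A B : Finset (Fin n)) : Prop :=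
  List.Forall₂ (· ≤ ·) ((A.image (fun x => x - i)).sort (· ≤ ·))
    ((B.image (fun x => x - i)).sort (· ≤ ·))

def MemPositroid {n : ℕ} (I : Fin n → Finset (Fin n)) (J : Finset (Fin n)) : Prop :=
  ∀ i, leShift i (I i) J

def IsWSCollection {n : ℕ} (C : Finset (Finset (Fin n))) : Prop :=
  ∀ X ∈ C, ∀ Y ∈ C, WeaklySeparated X Y

def IsMaxWSCollection {n : ℕ} (k : ℕ) (C : Finset (Finset (Fin n))) : Prop :=
  (∀ X ∈ C, X.card = k) ∧ IsWSCollection C ∧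
  ∀ C' : Finset (Finset (Fin n)), C ⊆ C' → (∀ X ∈ C', X.card = k) → IsWSCollection C' → C' = C

/-- Number of alignments of a permutation: pairs {i,j} with i, π(i), π(j), j
cyclically ordered and all distinct (each unordered alignment admits exactly
one such ordering). -/
def alignCount {N : ℕ} (π : Equiv.Perm (Fin N)) : ℕ :=
  (Finset.univ.filter
    (fun p : Fin N × Fin N => CyclicallyOrdered p.1 (π p.1) (π p.2) p.2)).card

/-- Number of inversions (Coxeter length) of w ∈ S_m. -/
def invCount {m : ℕ} (w : Equiv.Perm (Fin m)) : ℕ :=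
  (Finset.univ.filter (fun p : Fin m × Fin m => p.1 < p.2 ∧ w p.2 < w p.1)).card

/-!
Split the positions of `ŵ` into the left block `a < m`, which `ŵ` reverses onto the right
half, and the right block, indexed from the end by `b ↦ 2m-1-b`, on which `ŵ b = w⁻¹ b` lands
in the left half. Comparing the four positions shows that a pair is an alignment exactly when
both entries lie in the left block in decreasing order (`C(m,2)` pairs) or both lie in the right
block and form a non-inversion of `w⁻¹`; mixed pairs never align. Non-inversions of `w⁻¹`
correspond to those of `w`, of which there are `C(m,2) - ℓ(w)`.
-/

open Finset

lemma cpos_eq_ite {n : ℕ} (i x : Fin n) :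
    cpos i x = if (i : ℕ) ≤ x then (x : ℕ) - i else n + x - i := by
  unfold cpos
  rw [Fin.sub_def]
  show (n - (i : ℕ) + x) % n = _
  split_ifs
  · rw [show n - (i : ℕ) + x = n + (x - i) by omega, Nat.add_mod_left,
      Nat.mod_eq_of_lt (by omega)]
  · rw [Nat.mod_eq_of_lt (by omega)]
    omega

lemma cyclicallyOrdered_iff {n : ℕ} {a b c d : Fin n} :
    CyclicallyOrdered a b c d ↔
      (a < b ∧ b < c ∧ c < d) ∨ (b < c ∧ c < d ∧ d < a) ∨
        (c < d ∧ d < a ∧ a < b) ∨ (d < a ∧ a < b ∧ b < c) := by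
  simp only [CyclicallyOrdered, cpos_eq_ite, Fin.lt_def]
  split_ifs <;> omega

lemma card_filter_fst_lt_snd (m : ℕ) :
    #{p : Fin m × Fin m | p.1 < p.2} = m.choose 2 := by
  rw [card_filter, Fintype.sum_prod_type_right]
  simp only [← card_filter, filter_gt_eq_Iio, Fin.card_Iio]
  rw [Fin.sum_univ_eq_sum_range (fun i => i), sum_range_id, Nat.choose_two_right]

lemma two_mul_choose_two_add_self (n : ℕ) : 2 * n.choose 2 + n = n * n := by
  rw [Nat.choose_two_right, Nat.mul_div_cancel' (Nat.even_mul_pred_self n).two_dvd]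
  cases n <;> simp [Nat.mul_succ]

def nonInvCount {m : ℕ} (σ : Equiv.Perm (Fin m)) : ℕ :=
  #{p : Fin m × Fin m | p.1 < p.2 ∧ σ p.1 < σ p.2}

lemma nonInvCount_add_invCount {m : ℕ} (σ : Equiv.Perm (Fin m)) :
    nonInvCount σ + invCount σ = m.choose 2 := by
  rw [← card_filter_fst_lt_snd, ← card_filter_add_card_filter_not
    (s := {p : Fin m × Fin m | p.1 < p.2}) (p := fun p => σ p.1 < σ p.2)]
  simp only [nonInvCount, invCount, filter_filter]
  congr 2
  ext p
  simp only [mem_filter, mem_univ, true_and, not_lt, and_congr_right_iff]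
  intro hp
  exact ⟨le_of_lt, fun h => h.lt_of_ne (σ.injective.ne hp.ne')⟩

lemma nonInvCount_symm {m : ℕ} (σ : Equiv.Perm (Fin m)) :
    nonInvCount σ.symm = nonInvCount σ := by
  refine card_equiv (σ.prodCongr σ).symm fun p => ?_
  simp [and_comm]

def blockEquiv (m : ℕ) : Fin m ⊕ Fin m ≃ Fin (2 * m) :=
  (Equiv.sumCongr (Equiv.refl _) Fin.revPerm).trans
    (finSumFinEquiv.trans (finCongr (two_mul m).symm))

lemma val_blockEquiv_inl {m : ℕ} (a : Fin m) : (blockEquiv m (.inl a) : ℕ) = a := rfl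

lemma val_blockEquiv_inr {m : ℕ} (b : Fin m) :
    (blockEquiv m (.inr b) : ℕ) = 2 * m - 1 - b := by
  simp only [blockEquiv, Equiv.trans_apply, Equiv.sumCongr_apply, Sum.map_inr, Fin.revPerm_apply,
    finSumFinEquiv_apply_right, finCongr_apply, Fin.val_cast, Fin.val_natAdd, Fin.val_rev]
  omega

def IsHat {m : ℕ} (w : Equiv.Perm (Fin m)) (π : Equiv.Perm (Fin (2 * m))) : Prop :=
  ∀ i : Fin (2 * m),
    ((i : ℕ) < m → (π i : ℕ) = 2 * m - 1 - (i : ℕ)) ∧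
    (∀ j : Fin m, (i : ℕ) = m + (j : ℕ) → (π i : ℕ) = (w.symm j.rev : ℕ))

def HatAligned {m : ℕ} (w : Equiv.Perm (Fin m)) : Fin m ⊕ Fin m → Fin m ⊕ Fin m → Prop
  | .inl a, .inl b => b < a
  | .inr a, .inr b => a < b ∧ w.symm a < w.symm b
  | _, _ => False

namespace IsHat

variable {m : ℕ} {w : Equiv.Perm (Fin m)} {π : Equiv.Perm (Fin (2 * m))}

lemma val_apply_inl (hπ : IsHat w π) (a : Fin m) :
    (π (blockEquiv m (.inl a)) : ℕ) = 2 * m - 1 - a :=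
  (hπ _).1 a.isLt

lemma val_apply_inr (hπ : IsHat w π) (b : Fin m) :
    (π (blockEquiv m (.inr b)) : ℕ) = w.symm b := by
  rw [(hπ _).2 b.rev (by rw [val_blockEquiv_inr, Fin.val_rev]; omega), Fin.rev_rev]

lemma cyclicallyOrdered_iff (hπ : IsHat w π) (x y : Fin m ⊕ Fin m) :
    CyclicallyOrdered (blockEquiv m x) (π (blockEquiv m x)) (π (blockEquiv m y))
      (blockEquiv m y) ↔ HatAligned w x y := by
  rw [_root_.cyclicallyOrdered_iff]
  rcases x with a | a <;> rcases y with b | b <;>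
    simp only [HatAligned, Fin.lt_def, val_blockEquiv_inl, val_blockEquiv_inr, hπ.val_apply_inl,
      hπ.val_apply_inr, iff_false]
  all_goals
    have := a.isLt; have := b.isLt; have := (w.symm a).isLt; have := (w.symm b).isLt
    omega

lemma alignCount_eq (hπ : IsHat w π) : alignCount π = m.choose 2 + nonInvCount w.symm := by
  rw [alignCount, card_filter,
    ← Fintype.sum_equiv ((blockEquiv m).prodCongr (blockEquiv m)) _ _ fun _ => rfl]
  simp only [Fintype.sum_prod_type, Fintype.sum_sum_type, Equiv.prodCongr_apply, Prod.map_apply,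
    hπ.cyclicallyOrdered_iff, HatAligned, if_false, sum_const_zero, add_zero, zero_add]
  rw [← card_filter_fst_lt_snd, nonInvCount, card_filter, card_filter, Fintype.sum_prod_type,
    Fintype.sum_prod_type,
    sum_comm (s := univ) (t := univ) (f := fun a b => if b < a then 1 else 0)]

end IsHat

theorem stmt_15_general {m : ℕ} (w : Equiv.Perm (Fin m))
    (π : Equiv.Perm (Fin (2 * m)))
    (hπ : ∀ i : Fin (2 * m),
      ((i : ℕ) < m → (π i : ℕ) = 2 * m - 1 - (i : ℕ)) ∧
      (∀ j : Fin m, (i : ℕ) = m + (j : ℕ) → (π i : ℕ) = (w.symm j.rev : ℕ))) :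
    alignCount π + invCount w = 2 * Nat.choose m 2 ∧
    m * m = alignCount π + m + invCount w := by
  have hA : alignCount π = m.choose 2 + nonInvCount w := by
    rw [IsHat.alignCount_eq hπ, nonInvCount_symm]
  have hN := nonInvCount_add_invCount w
  have hsq := two_mul_choose_two_add_self m
  constructor <;> omega

/-- For ŵ = [2m, 2m−1, …, m+1, w⁻¹(m), …, w⁻¹(1)] ∈ S_{2m}, the number of
alignments is 2·C(m,2) − ℓ(w), hence ℓ(ŵ) = m² − A(ŵ) = m + ℓ(w). -/
theorem stmt_15 {m : ℕ} (hm : 0 < m) (w : Equiv.Perm (Fin m))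
    (π : Equiv.Perm (Fin (2 * m)))
    (hπ : ∀ i : Fin (2 * m),
      ((i : ℕ) < m → (π i : ℕ) = 2 * m - 1 - (i : ℕ)) ∧
      (∀ j : Fin m, (i : ℕ) = m + (j : ℕ) → (π i : ℕ) = (w.symm j.rev : ℕ))) :
    alignCount π + invCount w = 2 * Nat.choose m 2 ∧
    m * m = alignCount π + m + invCount w :=
  stmt_15_general w π hπ
end

section
/- Let a, b ∈ [n] be distinct, and let S, T ∈ binom([n],k−1) with S ≠ T be such that Sa, Sb, Ta, Tb are pairwise weakly separated. Then either S∖T ⊆ (a,b) and T∖S ⊆ (b,a), or T∖S ⊆ (a,b) and S∖T ⊆ (b,a). Consequently either S <_a T and T <_b S, or T <_a S and S <_b T. -/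
open List in
lemma aux_countP_ge {α : Type*} [LinearOrder α] (l : List α) (hl : l.Pairwise (· ≤ ·))
    (i : ℕ) (h : i < l.length) (v : α) (hv : l.get ⟨i, h⟩ ≤ v) :
    i + 1 ≤ l.countP (fun x => decide (x ≤ v)) := by
  have : l.countP (fun x => decide (x ≤ v)) =
      (l.take (i+1)).countP (fun x => decide (x ≤ v)) +
      (l.drop (i+1)).countP (fun x => decide (x ≤ v)) := by
    conv_lhs => rw [← List.take_append_drop (i+1) l]
    exact List.countP_append
  rw [this]
  have hlen : (l.take (i+1)).length = i + 1 := by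
    rw [List.length_take]; omega
  have hall : (l.take (i+1)).countP (fun x => decide (x ≤ v)) = i + 1 := by
    rw [List.countP_eq_length.2, hlen]
    intro x hx
    rw [List.mem_iff_getElem] at hx
    obtain ⟨j, hj, hjx⟩ := hx
    rw [List.getElem_take] at hjx
    have hj' : j ≤ i := by rw [hlen] at hj; omega
    subst hjx
    simp only [decide_eq_true_eq]
    exact le_trans (hl.rel_get_of_le (a := ⟨j, by omega⟩) (b := ⟨i, h⟩) (by exact hj')) hv
  omega

open List in
lemma aux_countP_le {α : Type*} [LinearOrder α] (l : List α) (hl : l.Pairwise (· ≤ ·))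
    (i : ℕ) (h : i < l.length) (v : α) (hv : v < l.get ⟨i, h⟩) :
    l.countP (fun x => decide (x ≤ v)) ≤ i := by
  have : l.countP (fun x => decide (x ≤ v)) =
      (l.take i).countP (fun x => decide (x ≤ v)) +
      (l.drop i).countP (fun x => decide (x ≤ v)) := by
    conv_lhs => rw [← List.take_append_drop i l]
    exact List.countP_append
  rw [this]
  have h1 : (l.take i).countP (fun x => decide (x ≤ v)) ≤ i := by
    calc (l.take i).countP _ ≤ (l.take i).length := List.countP_le_length
    _ ≤ i := by rw [List.length_take]; omega
  have h2 : (l.drop i).countP (fun x => decide (x ≤ v)) = 0 := by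
    rw [List.countP_eq_zero]
    intro x hx
    rw [List.mem_iff_getElem] at hx
    obtain ⟨j, hj, hjx⟩ := hx
    rw [List.getElem_drop] at hjx
    have hij : i + j < l.length := by rw [List.length_drop] at hj; omega
    have hle : l.get ⟨i, h⟩ ≤ x := by
      subst hjx
      exact hl.rel_get_of_le (a := ⟨i, h⟩) (b := ⟨i + j, hij⟩) (by simp)
    simp only [decide_eq_true_eq]
    intro hxv
    exact absurd (lt_of_le_of_lt (le_trans hle hxv) hv) (lt_irrefl _)
  omega

lemma card_filter_eq_countP {α : Type*} [LinearOrder α] [DecidableEq α] (s : Finset α)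
    (p : α → Prop) [DecidablePred p] :
    (s.filter p).card = (s.sort (· ≤ ·)).countP (fun x => decide (p x)) := by
  have h : (s.val) = ↑(s.sort (· ≤ ·)) := (Multiset.sort_eq _ _).symm
  rw [Finset.card, Finset.filter_val, h, Multiset.filter_coe, Multiset.coe_card,
    List.countP_eq_length_filter]

lemma forall₂_sort {α : Type*} [LinearOrder α] [DecidableEq α] (U V : Finset α)
    (hcard : U.card = V.card)
    (hcount : ∀ v, (V.filter (· ≤ v)).card ≤ (U.filter (· ≤ v)).card) :
    List.Forall₂ (· ≤ ·) (U.sort (· ≤ ·)) (V.sort (· ≤ ·)) := by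
  rw [List.forall₂_iff_get]
  constructor
  · rw [Finset.length_sort, Finset.length_sort]; exact hcard
  · intro i h₁ h₂
    by_contra hlt
    push_neg at hlt
    set v := (V.sort (· ≤ ·)).get ⟨i, h₂⟩ with hv
    have hge : i + 1 ≤ (V.filter (· ≤ v)).card := by
      rw [card_filter_eq_countP]
      exact aux_countP_ge _ (Finset.pairwise_sort _ _) i h₂ v (le_refl _)
    have hle : (U.filter (· ≤ v)).card ≤ i := by
      rw [card_filter_eq_countP]
      exact aux_countP_le _ (Finset.pairwise_sort _ _) i h₁ v hlt
    have := hcount v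
    omega



lemma count_structure {α : Type*} [LinearOrder α] [DecidableEq α]
    (C A B : Finset α) (hCA : Disjoint C A) (hCB : Disjoint C B)
    (hcard : A.card = B.card) (hAB : ∀ x ∈ A, ∀ y ∈ B, x ≤ y) (v : α) :
    ((C ∪ B).filter (· ≤ v)).card ≤ ((C ∪ A).filter (· ≤ v)).card := by
  rw [Finset.filter_union, Finset.filter_union,
    Finset.card_union_of_disjoint (Finset.disjoint_filter_filter hCB),
    Finset.card_union_of_disjoint (Finset.disjoint_filter_filter hCA)]
  have : (B.filter (· ≤ v)).card ≤ (A.filter (· ≤ v)).card := by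
    rcases (B.filter (· ≤ v)).eq_empty_or_nonempty with he | ⟨y, hy⟩
    · simp [he]
    · rw [Finset.mem_filter] at hy
      have hA : A.filter (· ≤ v) = A := by
        apply Finset.filter_true_of_mem
        intro x hx
        exact le_trans (hAB x hx y hy.1) hy.2
      rw [hA, hcard]
      exact Finset.card_filter_le _ _
  omega

lemma cpos_self {n : ℕ} (a : Fin n) : cpos a a = 0 := by
  haveI : NeZero n := ⟨a.pos.ne'⟩
  simp [cpos, sub_self]

lemma cpos_lt {n : ℕ} (a x : Fin n) : cpos a x < n := (x - a).isLt

lemma cpos_inj {n : ℕ} (a : Fin n) {x y : Fin n} (h : cpos a x = cpos a y) : x = y := by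
  haveI : NeZero n := ⟨a.pos.ne'⟩
  have h2 : x - a = y - a := Fin.ext h
  exact sub_left_injective h2

lemma cpos_eq_zero {n : ℕ} {a x : Fin n} (h : cpos a x = 0) : x = a := by
  haveI : NeZero n := ⟨a.pos.ne'⟩
  exact cpos_inj a (by rw [h, cpos_self])

lemma cpos_shift {n : ℕ} (a p x : Fin n) :
    cpos p x = (n - cpos a p + cpos a x) % n := by
  haveI : NeZero n := ⟨a.pos.ne'⟩
  have : x - p = (x - a) - (p - a) := (sub_sub_sub_cancel_right x p a).symm
  rw [cpos, this, Fin.sub_def]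
  rfl

lemma cpos_shift_le {n : ℕ} {a p x : Fin n} (h : cpos a p ≤ cpos a x) :
    cpos p x = cpos a x - cpos a p := by
  rw [cpos_shift a p x]
  have h1 := cpos_lt a x
  have : n - cpos a p + cpos a x = n + (cpos a x - cpos a p) := by
    have := cpos_lt a p; omega
  rw [this, Nat.add_mod_left, Nat.mod_eq_of_lt (by omega)]

lemma cpos_shift_gt {n : ℕ} {a p x : Fin n} (h : cpos a x < cpos a p) :
    cpos p x = n - cpos a p + cpos a x := by
  rw [cpos_shift a p x]
  have := cpos_lt a p
  exact Nat.mod_eq_of_lt (by omega)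

lemma leShift_of_split {n : ℕ} (a : Fin n) (S T : Finset (Fin n))
    (hcard : S.card = T.card)
    (h : ∀ p ∈ S \ T, ∀ q ∈ T \ S, cpos a p < cpos a q) : leShift a S T := by
  haveI : NeZero n := ⟨a.pos.ne'⟩
  have hinj : Function.Injective (fun x : Fin n => x - a) := sub_left_injective
  unfold leShift
  apply forall₂_sort
  · rw [Finset.card_image_of_injective _ hinj, Finset.card_image_of_injective _ hinj, hcard]
  · intro v
    have hSsplit : (S ∩ T) ∪ (S \ T) = S := by
      ext x; simp only [Finset.mem_union, Finset.mem_inter, Finset.mem_sdiff]; tauto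
    have hTsplit : (S ∩ T) ∪ (T \ S) = T := by
      ext x; simp only [Finset.mem_union, Finset.mem_inter, Finset.mem_sdiff]; tauto
    have hS' : S.image (fun x => x - a) =
        (S ∩ T).image (fun x => x - a) ∪ (S \ T).image (fun x => x - a) := by
      rw [← Finset.image_union, hSsplit]
    have hT' : T.image (fun x => x - a) =
        (S ∩ T).image (fun x => x - a) ∪ (T \ S).image (fun x => x - a) := by
      rw [← Finset.image_union, hTsplit]
    rw [hS', hT']
    apply count_structure
    · exact (Finset.disjoint_image hinj).2 (by
        rw [Finset.disjoint_left]; intro x hx hx'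
        exact (Finset.mem_sdiff.1 hx').2 (Finset.mem_inter.1 hx).2)
    · exact (Finset.disjoint_image hinj).2 (by
        rw [Finset.disjoint_left]; intro x hx hx'
        exact (Finset.mem_sdiff.1 hx').2 (Finset.mem_inter.1 hx).1)
    · rw [Finset.card_image_of_injective _ hinj, Finset.card_image_of_injective _ hinj]
      have h1 := Finset.card_sdiff_add_card_inter S T
      have h2 := Finset.card_sdiff_add_card_inter T S
      rw [Finset.inter_comm T S] at h2
      omega
    · intro x hx y hy
      obtain ⟨p, hp, rfl⟩ := Finset.mem_image.1 hx
      obtain ⟨q, hq, rfl⟩ := Finset.mem_image.1 hy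
      exact Fin.le_def.2 (le_of_lt (h p hp q hq))

lemma insert_sdiff_insert' {α : Type*} [DecidableEq α] {a b : α} {S T : Finset α}
    (hab : a ≠ b) (haT : a ∉ T) (hbS : b ∉ S) :
    (insert a S) \ (insert b T) = insert a (S \ T) := by
  ext x
  simp only [Finset.mem_sdiff, Finset.mem_insert, not_or]
  constructor
  · rintro ⟨(rfl | hxS), _, hxT⟩
    · exact Or.inl rfl
    · exact Or.inr ⟨hxS, hxT⟩
  · rintro (rfl | ⟨hxS, hxT⟩)
    · exact ⟨Or.inl rfl, hab, haT⟩
    · exact ⟨Or.inr hxS, fun hxb => hbS (hxb ▸ hxS), hxT⟩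

/-- If Sa, Sb, Ta, Tb are pairwise weakly separated k-sets (S ≠ T,
a,b ∉ S ∪ T), then S∖T ⊆ (a,b) and T∖S ⊆ (b,a) (whence S <_a T and T <_b S),
or the same with S and T exchanged. -/
theorem stmt_17 {n k : ℕ} (a b : Fin n) (hab : a ≠ b)
    (S T : Finset (Fin n)) (hS : S.card = k - 1) (hT : T.card = k - 1)
    (haS : a ∉ S) (hbS : b ∉ S) (haT : a ∉ T) (hbT : b ∉ T) (hST : S ≠ T)
    (h1 : WeaklySeparated (insert a S) (insert b S))
    (h2 : WeaklySeparated (insert a S) (insert a T))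
    (h3 : WeaklySeparated (insert a S) (insert b T))
    (h4 : WeaklySeparated (insert b S) (insert a T))
    (h5 : WeaklySeparated (insert b S) (insert b T))
    (h6 : WeaklySeparated (insert a T) (insert b T)) :
    (S \ T ⊆ cycOpen a b ∧ T \ S ⊆ cycOpen b a ∧
      leShift a S T ∧ leShift b T S) ∨
    (T \ S ⊆ cycOpen a b ∧ S \ T ⊆ cycOpen b a ∧
      leShift a T S ∧ leShift b S T) := by
  have hcards : S.card = T.card := hS.trans hT.symm
  set β := cpos a b with hβ
  have hβpos : 0 < β := Nat.pos_of_ne_zero (fun h0 => hab (cpos_eq_zero h0).symm)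
  have hβn : β < n := cpos_lt a b
  -- set difference computations
  have hD3a : (insert a S) \ (insert b T) = insert a (S \ T) :=
    insert_sdiff_insert' hab haT hbS
  have hD3b : (insert b T) \ (insert a S) = insert b (T \ S) :=
    insert_sdiff_insert' hab.symm hbS haT
  have hD4a : (insert b S) \ (insert a T) = insert b (S \ T) :=
    insert_sdiff_insert' hab.symm hbT haS
  have hD4b : (insert a T) \ (insert b S) = insert a (T \ S) :=
    insert_sdiff_insert' hab haS hbT
  -- basic facts about elements of the symmetric difference
  have hApos : ∀ p ∈ S \ T, 0 < cpos a p ∧ cpos a p ≠ β := by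
    intro p hp
    have hp' := Finset.mem_sdiff.1 hp
    constructor
    · exact Nat.pos_of_ne_zero (fun h0 => haS ((cpos_eq_zero h0) ▸ hp'.1))
    · intro h0
      exact hbS ((cpos_inj a h0) ▸ hp'.1)
  have hBpos : ∀ q ∈ T \ S, 0 < cpos a q ∧ cpos a q ≠ β := by
    intro q hq
    have hq' := Finset.mem_sdiff.1 hq
    constructor
    · exact Nat.pos_of_ne_zero (fun h0 => haT ((cpos_eq_zero h0) ▸ hq'.1))
    · intro h0
      exact hbT ((cpos_inj a h0) ▸ hq'.1)
  have hABne : ∀ p ∈ S \ T, ∀ q ∈ T \ S, cpos a p ≠ cpos a q := by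
    intro p hp q hq h0
    have := cpos_inj a h0
    subst this
    exact (Finset.mem_sdiff.1 hp).2 (Finset.mem_sdiff.1 hq).1
  -- Claim 1 : A and B cannot both meet the open arc (a,b)
  have claim1 : ∀ p ∈ S \ T, ∀ q ∈ T \ S, cpos a p < β → cpos a q < β → False := by
    intro p hp q hq hpβ hqβ
    have hP0 := (hApos p hp).1
    have hQ0 := (hBpos q hq).1
    rcases lt_or_gt_of_ne (hABne p hp q hq) with hlt | hgt
    · -- cpos a p < cpos a q : use h4 with pattern (p, q, b, a)
      apply h4
      have e1 : cpos p q = cpos a q - cpos a p := cpos_shift_le hlt.le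
      have e2 : cpos p b = β - cpos a p := cpos_shift_le (le_of_lt hpβ)
      have e3 : cpos p a = n - cpos a p + cpos a a := by
        exact cpos_shift_gt (by rw [cpos_self]; exact hP0)
      rw [cpos_self] at e3
      refine ⟨p, q, b, a, ⟨by omega, by omega, by omega⟩, ?_, ?_, ?_, ?_⟩
      · rw [hD4a]; exact Finset.mem_insert_of_mem hp
      · rw [hD4a]; exact Finset.mem_insert_self _ _
      · rw [hD4b]; exact Finset.mem_insert_of_mem hq
      · rw [hD4b]; exact Finset.mem_insert_self _ _
    · -- cpos a q < cpos a p : use h3 with pattern (a, q, p, b)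
      apply h3
      refine ⟨a, q, p, b, ⟨hQ0, hgt, hpβ⟩, ?_, ?_, ?_, ?_⟩
      · rw [hD3a]; exact Finset.mem_insert_self _ _
      · rw [hD3a]; exact Finset.mem_insert_of_mem hp
      · rw [hD3b]; exact Finset.mem_insert_of_mem hq
      · rw [hD3b]; exact Finset.mem_insert_self _ _
  -- Claim 2 : A and B cannot both meet the open arc (b,a)
  have claim2 : ∀ p ∈ S \ T, ∀ q ∈ T \ S, β < cpos a p → β < cpos a q → False := by
    intro p hp q hq hpβ hqβ
    rcases lt_or_gt_of_ne (hABne p hp q hq) with hlt | hgt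
    · -- cpos a p < cpos a q : use h3 with pattern (a, b, p, q)
      apply h3
      refine ⟨a, b, p, q, ⟨hβpos, hpβ, hlt⟩, ?_, ?_, ?_, ?_⟩
      · rw [hD3a]; exact Finset.mem_insert_self _ _
      · rw [hD3a]; exact Finset.mem_insert_of_mem hp
      · rw [hD3b]; exact Finset.mem_insert_self _ _
      · rw [hD3b]; exact Finset.mem_insert_of_mem hq
    · -- cpos a q < cpos a p : use h4 with pattern (b, q, p, a)
      apply h4
      have e1 : cpos b q = cpos a q - β := cpos_shift_le hqβ.le
      have e2 : cpos b p = cpos a p - β := cpos_shift_le hpβ.le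
      have e3 : cpos b a = n - β + cpos a a := by
        exact cpos_shift_gt (by rw [cpos_self]; exact hβpos)
      rw [cpos_self] at e3
      have hpn := cpos_lt a p
      refine ⟨b, q, p, a, ⟨by omega, by omega, by omega⟩, ?_, ?_, ?_, ?_⟩
      · rw [hD4a]; exact Finset.mem_insert_self _ _
      · rw [hD4a]; exact Finset.mem_insert_of_mem hp
      · rw [hD4b]; exact Finset.mem_insert_of_mem hq
      · rw [hD4b]; exact Finset.mem_insert_self _ _
  -- both symmetric differences are nonempty
  have hAne : (S \ T).Nonempty := by
    rw [Finset.sdiff_nonempty]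
    intro hsub
    exact hST (Finset.eq_of_subset_of_card_le hsub (le_of_eq hcards.symm))
  have hBne : (T \ S).Nonempty := by
    rw [Finset.sdiff_nonempty]
    intro hsub
    exact hST (Finset.eq_of_subset_of_card_le hsub (le_of_eq hcards)).symm
  obtain ⟨p0, hp0⟩ := hAne
  obtain ⟨q0, hq0⟩ := hBne
  rcases lt_or_gt_of_ne (hApos p0 hp0).2 with hp0β | hp0β
  · -- p0 ∈ (a,b) : first alternative
    left
    have hBsub : ∀ q ∈ T \ S, β < cpos a q := by
      intro q hq
      rcases lt_or_gt_of_ne (hBpos q hq).2 with h' | h'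
      · exact absurd (claim1 p0 hp0 q hq hp0β h') (fun h => h)
      · exact h'
    have hAsub : ∀ p ∈ S \ T, cpos a p < β := by
      intro p hp
      rcases lt_or_gt_of_ne (hApos p hp).2 with h' | h'
      · exact h'
      · exact absurd (claim2 p hp q0 hq0 h' (hBsub q0 hq0)) (fun h => h)
    refine ⟨?_, ?_, ?_, ?_⟩
    · intro x hx
      simp only [cycOpen, Finset.mem_filter, Finset.mem_univ, true_and]
      exact ⟨(hApos x hx).1, hAsub x hx⟩
    · intro x hx
      simp only [cycOpen, Finset.mem_filter, Finset.mem_univ, true_and]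
      have hx' := hBsub x hx
      have e1 : cpos b x = cpos a x - β := cpos_shift_le hx'.le
      have e2 : cpos b a = n - β + cpos a a :=
        cpos_shift_gt (by rw [cpos_self]; exact hβpos)
      rw [cpos_self] at e2
      have := cpos_lt a x
      constructor <;> omega
    · exact leShift_of_split a S T hcards
        (fun p hp q hq => lt_trans (hAsub p hp) (hBsub q hq))
    · apply leShift_of_split b T S hcards.symm
      intro q hq p hp
      have e1 : cpos b q = cpos a q - β := cpos_shift_le (hBsub q hq).le
      have e2 : cpos b p = n - β + cpos a p :=
        cpos_shift_gt (lt_of_lt_of_le (hAsub p hp) (le_refl β) |>.trans_le (le_refl β))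
      have := cpos_lt a q
      omega
  · -- p0 ∈ (b,a) : second alternative
    right
    have hBsub : ∀ q ∈ T \ S, cpos a q < β := by
      intro q hq
      rcases lt_or_gt_of_ne (hBpos q hq).2 with h' | h'
      · exact h'
      · exact absurd (claim2 p0 hp0 q hq hp0β h') (fun h => h)
    have hAsub : ∀ p ∈ S \ T, β < cpos a p := by
      intro p hp
      rcases lt_or_gt_of_ne (hApos p hp).2 with h' | h'
      · exact absurd (claim1 p hp q0 hq0 h' (hBsub q0 hq0)) (fun h => h)
      · exact h'
    refine ⟨?_, ?_, ?_, ?_⟩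
    · intro x hx
      simp only [cycOpen, Finset.mem_filter, Finset.mem_univ, true_and]
      exact ⟨(hBpos x hx).1, hBsub x hx⟩
    · intro x hx
      simp only [cycOpen, Finset.mem_filter, Finset.mem_univ, true_and]
      have hx' := hAsub x hx
      have e1 : cpos b x = cpos a x - β := cpos_shift_le hx'.le
      have e2 : cpos b a = n - β + cpos a a :=
        cpos_shift_gt (by rw [cpos_self]; exact hβpos)
      rw [cpos_self] at e2
      have := cpos_lt a x
      constructor <;> omega
    · exact leShift_of_split a T S hcards.symm
        (fun q hq p hp => lt_trans (hBsub q hq) (hAsub p hp))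
    · apply leShift_of_split b S T hcards
      intro p hp q hq
      have e1 : cpos b p = cpos a p - β := cpos_shift_le (hAsub p hp).le
      have e2 : cpos b q = n - β + cpos a q :=
        cpos_shift_gt ((hBsub q hq))
      have := cpos_lt a p
      omega
end
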